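/- Let V be a real inner product space, p a positive even integer, and a, b, c ∈ V. Then |a+c|^p - |b+c|^p - |a|^p + |b|^p ≤ ∑_{j=1}^{p/2} ∑_{k=0}^{j} C(p/2,j)·C(j,k)·2^{j-k}·|c|^{j+k} · [ 2^{p-2j-1}·(|a-b|^{p-2j} + |b|^{p-2j})·∑_{ℓ=1}^{j-k} C(j-k,ℓ)·|b|^{j-k-ℓ}·|a-b|^ℓ + ∑_{ℓ=1}^{p-2j} C(p-2j,ℓ)·|b|^{p-j-k-ℓ}·|a-b|^ℓ ]. -/

import Mathlib

/-!
Writing ‖x + c‖ ^ p = (‖x‖ ^ 2 + (2 ⟪x, c⟫ + ‖c‖ ^ 2)) ^ (p / 2) and expanding twice by the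
binomial theorem turns the left side into a sum over (j, k) of the differences
⟪a, c⟫ ^ s * ‖a‖ ^ q - ⟪b, c⟫ ^ s * ‖b‖ ^ q with s = j - k and q = p - 2 j. Each one splits as
(u ^ s - v ^ s) x ^ q + v ^ s (x ^ q - y ^ q). Both differences of powers obey
|u ^ n - v ^ n| ≤ (B + T) ^ n - B ^ n whenever |v| ≤ B and |u - v| ≤ T, where Cauchy–Schwarz and
the triangle inequality supply B and T, and x ^ q ≤ 2 ^ (q - 1) (‖a - b‖ ^ q + ‖b‖ ^ q).
-/

open Finset RealInnerProductSpace

theorem add_pow_sub_pow_eq_sum_Icc {R : Type*} [CommRing R] (x y : R) (n : ℕ) :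
    (x + y) ^ n - x ^ n = ∑ l ∈ Icc 1 n, (n.choose l : R) * x ^ (n - l) * y ^ l := by
  rw [add_comm, add_pow, range_eq_Ico, sum_eq_sum_Ico_succ_bot n.add_one_pos, zero_add,
    Ico_add_one_right_eq_Icc]
  simp only [pow_zero, Nat.sub_zero, Nat.choose_zero_right, Nat.cast_one, mul_one, one_mul,
    add_sub_cancel_left]
  exact sum_congr rfl fun l _ => by ring

theorem abs_pow_sub_pow_le_add_pow_sub_pow {u v B T : ℝ} (hv : |v| ≤ B) (huv : |u - v| ≤ T)
    (n : ℕ) : |u ^ n - v ^ n| ≤ (B + T) ^ n - B ^ n := by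
  rw [add_pow_sub_pow_eq_sum_Icc, ← add_sub_cancel v u, add_pow_sub_pow_eq_sum_Icc]
  refine (abs_sum_le_sum_abs _ _).trans (sum_le_sum fun l _ => ?_)
  have hB : 0 ≤ B := (abs_nonneg v).trans hv
  rw [abs_mul, abs_mul, abs_pow, abs_pow, Nat.abs_cast]
  gcongr

theorem add_pow_le_two_zpow_mul {a b : ℝ} (ha : 0 ≤ a) (hb : 0 ≤ b) (n : ℕ) :
    (a + b) ^ n ≤ 2 ^ ((n : ℤ) - 1) * (a ^ n + b ^ n) := by
  rcases n.eq_zero_or_pos with rfl | hn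
  · norm_num
  · rw [show (n : ℤ) - 1 = ((n - 1 : ℕ) : ℤ) by omega, zpow_natCast]
    exact add_pow_le ha hb n

section InnerProductSpace

variable {V : Type*} [NormedAddCommGroup V] [InnerProductSpace ℝ V]

theorem norm_add_pow_sub_norm_pow {p : ℕ} (hp : Even p) (x c : V) :
    ‖x + c‖ ^ p - ‖x‖ ^ p = ∑ j ∈ Icc 1 (p / 2), ∑ k ∈ range (j + 1),
      (Nat.choose (p / 2) j : ℝ) * (Nat.choose j k : ℝ) * 2 ^ (j - k) * ‖c‖ ^ (2 * k)
        * (⟪x, c⟫ ^ (j - k) * ‖x‖ ^ (p - 2 * j)) := by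
  obtain ⟨m, rfl⟩ := hp
  rw [← two_mul, Nat.mul_div_cancel_left m two_pos, pow_mul, pow_mul, norm_add_sq_real,
    add_assoc, add_pow_sub_pow_eq_sum_Icc]
  refine sum_congr rfl fun j _ => ?_
  rw [add_comm, add_pow, mul_sum, ← pow_mul, ← Nat.mul_sub]
  refine sum_congr rfl fun k _ => ?_
  rw [← pow_mul, mul_pow]
  ring

theorem inner_pow_mul_norm_pow_sub_le (a b c : V) (s q : ℕ) :
    ⟪a, c⟫ ^ s * ‖a‖ ^ q - ⟪b, c⟫ ^ s * ‖b‖ ^ q ≤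
      ‖c‖ ^ s * (2 ^ ((q : ℤ) - 1) * (‖a - b‖ ^ q + ‖b‖ ^ q) * ((‖b‖ + ‖a - b‖) ^ s - ‖b‖ ^ s)
        + ‖b‖ ^ s * ((‖b‖ + ‖a - b‖) ^ q - ‖b‖ ^ q)) := by
  have hinner : |⟪a, c⟫ ^ s - ⟪b, c⟫ ^ s| ≤ ‖c‖ ^ s * ((‖b‖ + ‖a - b‖) ^ s - ‖b‖ ^ s) := by
    have hdiff : |⟪a, c⟫ - ⟪b, c⟫| ≤ ‖a - b‖ * ‖c‖ := by
      rw [← inner_sub_left]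
      exact abs_real_inner_le_norm _ _
    have h := abs_pow_sub_pow_le_add_pow_sub_pow (abs_real_inner_le_norm b c) hdiff s
    rwa [← add_mul, mul_pow, mul_pow, ← sub_mul, mul_comm] at h
  have hnorm : |‖a‖ ^ q - ‖b‖ ^ q| ≤ (‖b‖ + ‖a - b‖) ^ q - ‖b‖ ^ q :=
    abs_pow_sub_pow_le_add_pow_sub_pow (abs_norm b).le (abs_norm_sub_norm_le a b) q
  have hpow : ‖a‖ ^ q ≤ 2 ^ ((q : ℤ) - 1) * (‖a - b‖ ^ q + ‖b‖ ^ q) :=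
    (pow_le_pow_left₀ (norm_nonneg a) (norm_le_norm_sub_add a b) q).trans
      (add_pow_le_two_zpow_mul (norm_nonneg _) (norm_nonneg _) q)
  have hinner_b : |⟪b, c⟫ ^ s| ≤ ‖c‖ ^ s * ‖b‖ ^ s := by
    rw [abs_pow, ← mul_pow, mul_comm]
    exact pow_le_pow_left₀ (abs_nonneg _) (abs_real_inner_le_norm b c) s
  calc ⟪a, c⟫ ^ s * ‖a‖ ^ q - ⟪b, c⟫ ^ s * ‖b‖ ^ q
      = (⟪a, c⟫ ^ s - ⟪b, c⟫ ^ s) * ‖a‖ ^ q + ⟪b, c⟫ ^ s * (‖a‖ ^ q - ‖b‖ ^ q) := by ring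
    _ ≤ |⟪a, c⟫ ^ s - ⟪b, c⟫ ^ s| * ‖a‖ ^ q + |⟪b, c⟫ ^ s| * |‖a‖ ^ q - ‖b‖ ^ q| := by
      rw [← abs_mul]
      gcongr
      · exact le_abs_self _
      · exact le_abs_self _
    _ ≤ ‖c‖ ^ s * ((‖b‖ + ‖a - b‖) ^ s - ‖b‖ ^ s) * (2 ^ ((q : ℤ) - 1) * (‖a - b‖ ^ q + ‖b‖ ^ q))
        + ‖c‖ ^ s * ‖b‖ ^ s * ((‖b‖ + ‖a - b‖) ^ q - ‖b‖ ^ q) := by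
      gcongr
      exact (abs_nonneg _).trans hinner
    _ = _ := by ring

end InnerProductSpace

theorem stmt_15_general {V : Type*} [NormedAddCommGroup V] [InnerProductSpace ℝ V]
    (p : ℕ) (hpe : Even p) (a b c : V) :
    ‖a + c‖ ^ p - ‖b + c‖ ^ p - ‖a‖ ^ p + ‖b‖ ^ p
      ≤ ∑ j ∈ Finset.Icc 1 (p / 2), ∑ k ∈ Finset.range (j + 1),
          (Nat.choose (p / 2) j : ℝ) * (Nat.choose j k : ℝ) * 2 ^ (j - k)
            * ‖c‖ ^ (j + k)
            * ((2 : ℝ) ^ ((p : ℤ) - 2 * j - 1)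
                  * (‖a - b‖ ^ (p - 2 * j) + ‖b‖ ^ (p - 2 * j))
                  * ∑ l ∈ Finset.Icc 1 (j - k),
                      (Nat.choose (j - k) l : ℝ) * ‖b‖ ^ (j - k - l)
                        * ‖a - b‖ ^ l
                + ∑ l ∈ Finset.Icc 1 (p - 2 * j),
                    (Nat.choose (p - 2 * j) l : ℝ) * ‖b‖ ^ (p - j - k - l)
                      * ‖a - b‖ ^ l) := by
  rw [show ‖a + c‖ ^ p - ‖b + c‖ ^ p - ‖a‖ ^ p + ‖b‖ ^ p
      = (‖a + c‖ ^ p - ‖a‖ ^ p) - (‖b + c‖ ^ p - ‖b‖ ^ p) by ring,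
    norm_add_pow_sub_norm_pow hpe, norm_add_pow_sub_norm_pow hpe, ← sum_sub_distrib]
  refine sum_le_sum fun j hj => ?_
  rw [← sum_sub_distrib]
  refine sum_le_sum fun k hk => ?_
  have hj : 2 * j ≤ p := by rw [mem_Icc] at hj; omega
  have hk : k ≤ j := Nat.lt_succ_iff.mp (mem_range.mp hk)
  have hsum : ∑ l ∈ Icc 1 (p - 2 * j), (Nat.choose (p - 2 * j) l : ℝ) * ‖b‖ ^ (p - j - k - l)
      * ‖a - b‖ ^ l = ‖b‖ ^ (j - k) * ((‖b‖ + ‖a - b‖) ^ (p - 2 * j) - ‖b‖ ^ (p - 2 * j)) := by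
    rw [add_pow_sub_pow_eq_sum_Icc, mul_sum]
    refine sum_congr rfl fun l hl => ?_
    rw [show p - j - k - l = (j - k) + (p - 2 * j - l) by rw [mem_Icc] at hl; omega, pow_add]
    ring
  rw [hsum, ← add_pow_sub_pow_eq_sum_Icc, show j + k = 2 * k + (j - k) by omega, pow_add,
    show (p : ℤ) - 2 * j - 1 = ((p - 2 * j : ℕ) : ℤ) - 1 by omega, ← mul_sub,
    ← mul_assoc _ (‖c‖ ^ (2 * k)), mul_assoc _ (‖c‖ ^ (j - k))]
  gcongr
  exact inner_pow_mul_norm_pow_sub_le a b c _ _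

theorem stmt_15 {V : Type*} [NormedAddCommGroup V] [InnerProductSpace ℝ V]
    (p : ℕ) (hp : 0 < p) (hpe : Even p) (a b c : V) :
    ‖a + c‖ ^ p - ‖b + c‖ ^ p - ‖a‖ ^ p + ‖b‖ ^ p
      ≤ ∑ j ∈ Finset.Icc 1 (p / 2), ∑ k ∈ Finset.range (j + 1),
          (Nat.choose (p / 2) j : ℝ) * (Nat.choose j k : ℝ) * 2 ^ (j - k)
            * ‖c‖ ^ (j + k)
            * ((2 : ℝ) ^ ((p : ℤ) - 2 * j - 1)
                  * (‖a - b‖ ^ (p - 2 * j) + ‖b‖ ^ (p - 2 * j))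
                  * ∑ l ∈ Finset.Icc 1 (j - k),
                      (Nat.choose (j - k) l : ℝ) * ‖b‖ ^ (j - k - l)
                        * ‖a - b‖ ^ l
                + ∑ l ∈ Finset.Icc 1 (p - 2 * j),
                    (Nat.choose (p - 2 * j) l : ℝ) * ‖b‖ ^ (p - j - k - l)
                      * ‖a - b‖ ^ l) :=
  stmt_15_general p hpe a b c
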